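/- For every unit quaternion q and every real r ≥ 0, sSup { ‖q * v * (star q) − v‖ : v a pure quaternion with ‖v‖ ≤ r } = 2 · ‖Im q‖ · r; that is, the maximal displacement D(R_q) of the rotation R_q over the ball of radius r equals 2|Im q| r. -/

import Mathlib

/-!
For a unit quaternion `q` and any `v`, `q * v * star q - v = (q * v - v * q) * star q`, and the
real part of `q` commutes with `v`; so the displacement of `v` is `‖u * v - v * u‖` with
`u = Im q`. This is at most `2 * ‖u‖ * ‖v‖` by the triangle inequality, with equality when `v`
is pure and orthogonal to `u`, i.e. `(u * v).re = 0`: then `u * v` is pure, and conjugating it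
shows `v * u = -(u * v)`. A nonzero such `v` exists because two linear conditions cannot cut the
four-dimensional `ℍ` down to zero.
-/

theorem norm_mul_sub_mul_le {R : Type*} [NonUnitalSeminormedRing R] (a b : R) :
    ‖a * b - b * a‖ ≤ 2 * ‖a‖ * ‖b‖ :=
  calc ‖a * b - b * a‖ ≤ ‖a * b‖ + ‖b * a‖ := norm_sub_le _ _
    _ ≤ ‖a‖ * ‖b‖ + ‖b‖ * ‖a‖ := add_le_add (norm_mul_le a b) (norm_mul_le b a)
    _ = 2 * ‖a‖ * ‖b‖ := by ring

namespace Quaternion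

theorem norm_mul_mul_star_sub_self {q : ℍ[ℝ]} (hq : ‖q‖ = 1) (v : ℍ[ℝ]) :
    ‖q * v * star q - v‖ = ‖q.im * v - v * q.im‖ := by
  have hq_star : q * star q = 1 := by
    rw [self_mul_star, normSq_eq_norm_mul_self, hq, mul_one, coe_one]
  have hconj : q * v * star q - v = (q * v - v * q) * star q := by
    rw [sub_mul, mul_assoc v, hq_star, mul_one]
  have hcomm : q * v - v * q = q.im * v - v * q.im := by
    conv_lhs => rw [← q.re_add_im]
    rw [add_mul, mul_add, coe_mul_eq_smul, mul_coe_eq_smul]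
    abel
  rw [hconj, norm_mul, norm_star, hq, mul_one, hcomm]

theorem mul_eq_neg_mul_of_re_eq_zero {u v : ℍ[ℝ]} (hu : u.re = 0) (hv : v.re = 0)
    (huv : (u * v).re = 0) : v * u = -(u * v) :=
  calc v * u = star v * star u := by rw [star_eq_neg.2 hu, star_eq_neg.2 hv, neg_mul_neg]
    _ = star (u * v) := (star_mul u v).symm
    _ = -(u * v) := star_eq_neg.2 huv

theorem norm_mul_sub_mul_of_re_eq_zero {u v : ℍ[ℝ]} (hu : u.re = 0) (hv : v.re = 0)
    (huv : (u * v).re = 0) : ‖u * v - v * u‖ = 2 * ‖u‖ * ‖v‖ := by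
  rw [mul_eq_neg_mul_of_re_eq_zero hu hv huv, sub_neg_eq_add, ← two_smul ℝ, norm_smul, norm_mul,
    Real.norm_two, mul_assoc]

theorem exists_ne_zero_re_eq_zero_re_mul_eq_zero (u : ℍ[ℝ]) :
    ∃ v : ℍ[ℝ], v ≠ 0 ∧ v.re = 0 ∧ (u * v).re = 0 := by
  let re : ℍ[ℝ] →ₗ[ℝ] ℝ := QuaternionAlgebra.reₗ _ _ _
  let f : ℍ[ℝ] →ₗ[ℝ] ℝ × ℝ := re.prod (re ∘ₗ LinearMap.mulLeft ℝ u)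
  have hker : LinearMap.ker f ≠ ⊥ :=
    LinearMap.ker_ne_bot_of_finrank_lt (by simp [finrank_eq_four])
  obtain ⟨v, hv, hv0⟩ := Submodule.exists_mem_ne_zero_of_ne_bot hker
  exact ⟨v, hv0, Prod.mk_eq_zero.1 (LinearMap.mem_ker.1 hv)⟩

theorem exists_re_eq_zero_re_mul_eq_zero_norm_eq (u : ℍ[ℝ]) {r : ℝ} (hr : 0 ≤ r) :
    ∃ v : ℍ[ℝ], v.re = 0 ∧ (u * v).re = 0 ∧ ‖v‖ = r := by
  obtain ⟨v, hv0, hv, huv⟩ := exists_ne_zero_re_eq_zero_re_mul_eq_zero u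
  refine ⟨(r / ‖v‖) • v, by simp [hv], by simp [huv], ?_⟩
  rw [norm_smul, Real.norm_of_nonneg (by positivity), div_mul_cancel₀ _ (norm_ne_zero_iff.2 hv0)]

end Quaternion

open Quaternion

/-- For every unit quaternion `q` and `r ≥ 0`, the maximal displacement of the rotation
`R_q` over the ball of radius `r` equals `2 * ‖Im q‖ * r`. -/
theorem sSup_displacement_eq_two_norm_im_mul
    (q : Quaternion ℝ) (hq : ‖q‖ = 1) (r : ℝ) (hr : 0 ≤ r) :
    sSup { x : ℝ | ∃ v : Quaternion ℝ, v.re = 0 ∧ ‖v‖ ≤ r ∧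
        x = ‖q * v * star q - v‖ } = 2 * ‖q.im‖ * r := by
  refine IsGreatest.csSup_eq ⟨?_, ?_⟩
  · obtain ⟨v, hv, hqv, rfl⟩ := exists_re_eq_zero_re_mul_eq_zero_norm_eq q.im hr
    exact ⟨v, hv, le_rfl, by rw [norm_mul_mul_star_sub_self hq,
      norm_mul_sub_mul_of_re_eq_zero q.re_im hv hqv]⟩
  · rintro x ⟨v, -, hvr, rfl⟩
    rw [norm_mul_mul_star_sub_self hq]
    calc ‖q.im * v - v * q.im‖ ≤ 2 * ‖q.im‖ * ‖v‖ := norm_mul_sub_mul_le _ _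
      _ ≤ 2 * ‖q.im‖ * r := by gcongr
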